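/- Let s ∈ ℝ and m_s = [[s, 1−s],[−1,1]] ∈ SL₂(ℝ), D the diagonal subgroup modulo ±I, ξ = [[0,1],[−1,0]], and G = D ∪ Dξ ⊆ PSL₂(ℝ). Then {g ∈ G : m_s g m_s⁻¹ ∈ G} equals {id} if s ∉ (0,1), and equals {id, [[0, μ],[−μ⁻¹, 0]]} with μ = √((1−s)/s) if s ∈ (0,1). -/

import Mathlib

/-- `SL(2,ℝ)`. -/
abbrev SL2R := Matrix.SpecialLinearGroup (Fin 2) ℝ

/-- `PSL(2,ℝ) = SL(2,ℝ)/{±I}`. -/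
abbrev PSL2R := SL2R ⧸ Subgroup.center SL2R

/-- The projection `SL(2,ℝ) → PSL(2,ℝ)`. -/
def projPSL : SL2R →* PSL2R := QuotientGroup.mk' (Subgroup.center SL2R)

/-- The image `D` of the diagonal subgroup in `PSL(2,ℝ)`. -/
def Dset : Set PSL2R :=
  {g | ∃ (α : ℝ) (hα : α ≠ 0),
    g = projPSL ⟨!![α, 0; 0, α⁻¹], by rw [Matrix.det_fin_two_of]; field_simp <;> norm_num⟩}

/-- The class `ξ` of `[[0,1],[-1,0]]` in `PSL(2,ℝ)`. -/
def xiP : PSL2R := projPSL ⟨!![0, 1; -1, 0], by rw [Matrix.det_fin_two_of]; norm_num⟩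

/-- The subgroup `G = D ∪ Dξ` of `PSL(2,ℝ)`, as a set. -/
def Gset : Set PSL2R := Dset ∪ (fun g => g * xiP) '' Dset

/-- The class of the matrix `m_s = [[s, 1-s],[-1, 1]]` (of determinant 1). -/
def mP (s : ℝ) : PSL2R :=
  projPSL ⟨!![s, 1 - s; -1, 1], by rw [Matrix.det_fin_two_of]; ring⟩

/-!
Lift to `SL(2,ℝ)`: the class of `A` lies in `G` exactly when `A` is diagonal or antidiagonal.
Conjugating `A = diag(a, d)` by `m_s` gives a matrix with `(1,0)` entry `d - a` and trace
`a + d`; as `a d = 1` it can only be diagonal, which forces `a = d = ±1`, the identity of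
`PSL(2,ℝ)`. Conjugating `A = [[0, b], [c, 0]]` gives a matrix with diagonal `±(s b + (1 - s) c)`
and `(1,0)` entry `c - b`; as `b c = -1` only the antidiagonal alternative
`s b + (1 - s) c = 0`, i.e. `s b² = 1 - s`, can hold, and it has the solutions `b = ±μ`
exactly when `0 < s < 1`.
-/

lemma SL2R.mem_center_iff (A : SL2R) : A ∈ Subgroup.center SL2R ↔ A = 1 ∨ A = -1 := by
  rw [Matrix.SpecialLinearGroup.mem_center_iff, Fintype.card_fin]
  constructor
  · rintro ⟨r, hr, hA⟩
    rcases sq_eq_one_iff.1 hr with rfl | rfl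
    · exact .inl (Subtype.ext (by rw [← hA, map_one]; rfl))
    · exact .inr (Subtype.ext (by rw [← hA, map_neg, map_one]; rfl))
  · rintro (rfl | rfl)
    · exact ⟨1, one_pow _, map_one _⟩
    · exact ⟨-1, by norm_num, by rw [map_neg, map_one]; rfl⟩

lemma projPSL_eq_one_iff (A : SL2R) : projPSL A = 1 ↔ A = 1 ∨ A = -1 :=
  (QuotientGroup.eq_one_iff A).trans (SL2R.mem_center_iff A)

lemma projPSL_eq_projPSL_iff (A B : SL2R) : projPSL A = projPSL B ↔ A = B ∨ A = -B := by
  rw [← div_eq_one, ← map_div, projPSL_eq_one_iff, div_eq_one, div_eq_iff_eq_mul, neg_one_mul]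

noncomputable def diagSL (α : ℝ) (hα : α ≠ 0) : SL2R := ⟨!![α, 0; 0, α⁻¹], by simp [hα]⟩

noncomputable def antidiagSL (b : ℝ) (hb : b ≠ 0) : SL2R := ⟨!![0, b; -b⁻¹, 0], by simp [hb]⟩

def xiSL : SL2R := ⟨!![0, 1; -1, 0], by simp⟩

def mSL (s : ℝ) : SL2R := ⟨!![s, 1 - s; -1, 1], by rw [Matrix.det_fin_two_of]; ring⟩

@[simp] lemma coe_diagSL (α : ℝ) (hα : α ≠ 0) :
    (diagSL α hα : Matrix (Fin 2) (Fin 2) ℝ) = !![α, 0; 0, α⁻¹] := rfl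

@[simp] lemma coe_antidiagSL (b : ℝ) (hb : b ≠ 0) :
    (antidiagSL b hb : Matrix (Fin 2) (Fin 2) ℝ) = !![0, b; -b⁻¹, 0] := rfl

@[simp] lemma coe_xiSL : (xiSL : Matrix (Fin 2) (Fin 2) ℝ) = !![0, 1; -1, 0] := rfl

@[simp] lemma coe_mSL (s : ℝ) : (mSL s : Matrix (Fin 2) (Fin 2) ℝ) = !![s, 1 - s; -1, 1] := rfl

lemma SL2R.diag_mul_eq_one {A : SL2R} (h01 : A 0 1 = 0) (h10 : A 1 0 = 0) :
    A 0 0 * A 1 1 = 1 := by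
  have hdet := A.2
  rw [Matrix.det_fin_two, h01, h10] at hdet
  linarith

lemma SL2R.antidiag_mul_eq_neg_one {A : SL2R} (h00 : A 0 0 = 0) (h11 : A 1 1 = 0) :
    A 0 1 * A 1 0 = -1 := by
  have hdet := A.2
  rw [Matrix.det_fin_two, h00, h11] at hdet
  linarith

lemma SL2R.eq_one_or_eq_neg_one_of_diag {A : SL2R} (h01 : A 0 1 = 0) (h10 : A 1 0 = 0)
    (h : A 0 0 = A 1 1) : A = 1 ∨ A = -1 := by
  have had := SL2R.diag_mul_eq_one h01 h10
  rw [← h] at had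
  refine (mul_self_eq_one_iff.1 had).imp (fun ha => ?_) (fun ha => ?_) <;>
    ext i j <;> fin_cases i <;> fin_cases j <;> simp [h01, h10, ha, ← h]

lemma SL2R.exists_eq_antidiagSL {A : SL2R} (h00 : A 0 0 = 0) (h11 : A 1 1 = 0) :
    ∃ hb : A 0 1 ≠ 0, A = antidiagSL (A 0 1) hb := by
  have hbc := SL2R.antidiag_mul_eq_neg_one h00 h11
  have hb : A 0 1 ≠ 0 := left_ne_zero_of_mul (by rw [hbc]; norm_num)
  have hc : A 1 0 = -(A 0 1)⁻¹ := by field_simp; linarith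
  refine ⟨hb, Subtype.ext ?_⟩
  ext i j; fin_cases i <;> fin_cases j <;> simp [h00, h11, hc]

lemma projPSL_mem_Dset_iff (A : SL2R) : projPSL A ∈ Dset ↔ A 0 1 = 0 ∧ A 1 0 = 0 := by
  constructor
  · rintro ⟨α, hα, h⟩
    rcases (projPSL_eq_projPSL_iff A (diagSL α hα)).1 h with rfl | rfl <;> simp
  · rintro ⟨h01, h10⟩
    have had := SL2R.diag_mul_eq_one h01 h10
    refine ⟨A 0 0, left_ne_zero_of_mul_eq_one had, congrArg projPSL (Subtype.ext ?_)⟩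
    ext i j
    fin_cases i <;> fin_cases j <;> simp [h01, h10, eq_inv_of_mul_eq_one_right had]

lemma projPSL_mem_Gset_iff (A : SL2R) :
    projPSL A ∈ Gset ↔ (A 0 1 = 0 ∧ A 1 0 = 0) ∨ (A 0 0 = 0 ∧ A 1 1 = 0) := by
  have hξ : projPSL A * xiP⁻¹ = projPSL (A * xiSL⁻¹) := by rw [map_mul, map_inv]; rfl
  rw [Gset, Set.mem_union, Set.image_mul_right, Set.mem_preimage, hξ, projPSL_mem_Dset_iff,
    projPSL_mem_Dset_iff]
  simp [Matrix.SpecialLinearGroup.coe_inv, Matrix.adjugate_fin_two, Matrix.mul_apply,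
    Fin.sum_univ_two]

lemma coe_mSL_conj (s : ℝ) (A : SL2R) :
    ((mSL s * A * (mSL s)⁻¹ : SL2R) : Matrix (Fin 2) (Fin 2) ℝ) =
      !![s * A 0 0 + (1 - s) * A 1 0 + s * A 0 1 + (1 - s) * A 1 1,
        (s * A 0 0 + (1 - s) * A 1 0) * (s - 1) + (s * A 0 1 + (1 - s) * A 1 1) * s;
        -A 0 0 + A 1 0 - A 0 1 + A 1 1,
        (-A 0 0 + A 1 0) * (s - 1) + (-A 0 1 + A 1 1) * s] := by
  rw [Matrix.SpecialLinearGroup.coe_mul, Matrix.SpecialLinearGroup.coe_mul,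
    Matrix.SpecialLinearGroup.coe_inv, coe_mSL, Matrix.adjugate_fin_two_of]
  conv_lhs => rw [Matrix.eta_fin_two (A : Matrix (Fin 2) (Fin 2) ℝ)]
  rw [Matrix.mul_fin_two, Matrix.mul_fin_two]
  congr 1
  ext i j
  fin_cases i <;> fin_cases j <;> dsimp <;> ring

lemma mP_conj_projPSL (s : ℝ) (A : SL2R) :
    mP s * projPSL A * (mP s)⁻¹ = projPSL (mSL s * A * (mSL s)⁻¹) := by
  rw [map_mul, map_mul, map_inv]; rfl

lemma mP_conj_mem_Gset_iff_of_diag (s : ℝ) {A : SL2R} (h01 : A 0 1 = 0) (h10 : A 1 0 = 0) :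
    mP s * projPSL A * (mP s)⁻¹ ∈ Gset ↔ A 0 0 = A 1 1 := by
  have had := SL2R.diag_mul_eq_one h01 h10
  rw [mP_conj_projPSL, projPSL_mem_Gset_iff, coe_mSL_conj]
  simp only [h01, h10, Matrix.of_apply, Matrix.cons_val', Matrix.cons_val_zero, Matrix.cons_val_one,
    Matrix.cons_val_fin_one]
  constructor
  · rintro (⟨-, h⟩ | ⟨h, h'⟩)
    · linarith
    · nlinarith
  · intro h
    left
    constructor <;> rw [h] <;> ring

lemma mP_conj_mem_Gset_iff_of_antidiag (s : ℝ) {A : SL2R} (h00 : A 0 0 = 0) (h11 : A 1 1 = 0) :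
    mP s * projPSL A * (mP s)⁻¹ ∈ Gset ↔ s * A 0 1 + (1 - s) * A 1 0 = 0 := by
  have hbc := SL2R.antidiag_mul_eq_neg_one h00 h11
  rw [mP_conj_projPSL, projPSL_mem_Gset_iff, coe_mSL_conj]
  simp only [h00, h11, Matrix.of_apply, Matrix.cons_val', Matrix.cons_val_zero,
    Matrix.cons_val_one, Matrix.cons_val_fin_one]
  constructor
  · rintro (⟨-, h⟩ | ⟨h, -⟩)
    · have hcb : A 1 0 = A 0 1 := by linarith
      rw [hcb] at hbc
      nlinarith [mul_self_nonneg (A 0 1)]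
    · linarith
  · intro h
    right
    constructor <;> linarith

lemma mem_Gset_and_mP_conj_mem_Gset_iff (s : ℝ) (g : PSL2R) :
    (g ∈ Gset ∧ mP s * g * (mP s)⁻¹ ∈ Gset) ↔
      g = 1 ∨ ∃ (b : ℝ) (hb : b ≠ 0), s * b ^ 2 = 1 - s ∧ g = projPSL (antidiagSL b hb) := by
  constructor
  · obtain ⟨A, rfl⟩ := QuotientGroup.mk'_surjective (Subgroup.center SL2R) g
    rintro ⟨hA, hconj⟩
    rcases (projPSL_mem_Gset_iff A).1 hA with ⟨h01, h10⟩ | ⟨h00, h11⟩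
    · have h := (mP_conj_mem_Gset_iff_of_diag s h01 h10).1 hconj
      exact .inl ((projPSL_eq_one_iff A).2 (SL2R.eq_one_or_eq_neg_one_of_diag h01 h10 h))
    · have h := (mP_conj_mem_Gset_iff_of_antidiag s h00 h11).1 hconj
      obtain ⟨hb, hA⟩ := SL2R.exists_eq_antidiagSL h00 h11
      refine .inr ⟨A 0 1, hb, ?_, congrArg projPSL hA⟩
      linear_combination A 0 1 * h - (1 - s) * SL2R.antidiag_mul_eq_neg_one h00 h11
  · have h1 : (1 : PSL2R) ∈ Gset := by
      simpa using (projPSL_mem_Gset_iff 1).2 (.inl ⟨by simp, by simp⟩)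
    rintro (rfl | ⟨b, hb, hsb, rfl⟩)
    · exact ⟨h1, by simpa using h1⟩
    · refine ⟨(projPSL_mem_Gset_iff _).2 (.inr ⟨rfl, rfl⟩),
        (mP_conj_mem_Gset_iff_of_antidiag s rfl rfl).2 ?_⟩
      have h : s * b + (1 - s) * -b⁻¹ = 0 := by field_simp; linarith
      simpa using h

lemma mem_Ioo_of_mul_sq_eq_one_sub {s b : ℝ} (hb : b ≠ 0) (h : s * b ^ 2 = 1 - s) :
    s ∈ Set.Ioo 0 1 := by
  have hb2 : 0 < b ^ 2 := by positivity
  constructor <;> nlinarith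

lemma exists_projPSL_antidiagSL_iff {s μ : ℝ} (hμ : μ ≠ 0) (hsμ : s * μ ^ 2 = 1 - s) (g : PSL2R) :
    (∃ (b : ℝ) (hb : b ≠ 0), s * b ^ 2 = 1 - s ∧ g = projPSL (antidiagSL b hb)) ↔
      g = projPSL (antidiagSL μ hμ) := by
  constructor
  · rintro ⟨b, hb, hsb, rfl⟩
    have hs : s ≠ 0 := by rintro rfl; linarith
    rw [projPSL_eq_projPSL_iff]
    rcases sq_eq_sq_iff_eq_or_eq_neg.1 (mul_left_cancel₀ hs (hsb.trans hsμ.symm)) with rfl | rfl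
    · exact .inl rfl
    · right; ext i j; fin_cases i <;> fin_cases j <;> simp [inv_neg]
  · rintro rfl
    exact ⟨μ, hμ, hsμ, rfl⟩

theorem stmt17 (s : ℝ) :
    (s ∉ Set.Ioo (0:ℝ) 1 →
      {g ∈ Gset | mP s * g * (mP s)⁻¹ ∈ Gset} = {1}) ∧
    (∀ hs : s ∈ Set.Ioo (0:ℝ) 1,
      {g ∈ Gset | mP s * g * (mP s)⁻¹ ∈ Gset} =
        {1, projPSL ⟨!![0, Real.sqrt ((1 - s)/s); -(Real.sqrt ((1 - s)/s))⁻¹, 0], by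
          have hμ : Real.sqrt ((1 - s)/s) ≠ 0 :=
            ne_of_gt (Real.sqrt_pos.mpr (div_pos (by linarith [hs.2]) hs.1))
          rw [Matrix.det_fin_two_of]; field_simp <;> norm_num⟩}) := by
  constructor
  · intro hs
    ext g
    rw [Set.mem_sep_iff, mem_Gset_and_mP_conj_mem_Gset_iff, Set.mem_singleton_iff, or_iff_left]
    rintro ⟨b, hb, hsb, -⟩
    exact hs (mem_Ioo_of_mul_sq_eq_one_sub hb hsb)
  · rintro ⟨hs0, hs1⟩
    have hμ : √((1 - s) / s) ≠ 0 := (Real.sqrt_pos.2 (div_pos (by linarith) hs0)).ne'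
    have hsμ : s * √((1 - s) / s) ^ 2 = 1 - s := by
      rw [Real.sq_sqrt (div_pos (by linarith) hs0).le]
      field_simp
    ext g
    rw [Set.mem_sep_iff, mem_Gset_and_mP_conj_mem_Gset_iff, exists_projPSL_antidiagSL_iff hμ hsμ]
    rfl
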